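/- In a directed graph G* where dist_{G*}(s,t) ≥ k, let E*_k denote the set of arcs on s-t-paths of length exactly k. If a flow y supported on E*_k saturates at least one arc of E*_k and augmentation by y yields residual network G̃* with arc set Ẽ*_k of arcs on s-t-paths of length exactly k, then Ẽ*_k ⊊ E*_k whenever E*_k is nonempty; in particular |Ẽ*_k| < |E*_k|. -/

import Mathlib

/-!
Let `d` be the distance from `s` in the old residual network. An arc of the new residual
network is either an old arc, along which `d` rises by at most one, or the reversal of an arc
carrying flow; such an arc lies on a shortest `s`-`t`-path, so `d` drops by one along its
reversal. Since `d t = k`, an `s`-`t`-walk of length `k` in the new network must raise `d` by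
exactly one at each step, hence uses old arcs only. The saturated arc is no longer residual.
-/

open Finset

noncomputable def resCap {N : ℕ} (ν x : Fin N → Fin N → ℝ) (u v : Fin N) : ℝ :=
  if u < v then ν u v - x u v else if v < u then ν u v + x v u else 0

def IsFeasibleFlow {N : ℕ} (s t : Fin N) (ν x : Fin N → Fin N → ℝ) : Prop :=
  (∀ u v : Fin N, u < v → -ν v u ≤ x u v ∧ x u v ≤ ν u v) ∧
  (∀ w : Fin N, w ≠ s → w ≠ t →
    ∑ u ∈ univ.filter (· < w), x u w = ∑ v ∈ univ.filter (w < ·), x w v)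

def IsWalk {V : Type*} (A : V → V → Prop) (k : ℕ) (f : Fin (k + 1) → V) : Prop :=
  ∀ i : Fin k, A (f i.castSucc) (f i.succ)

def WalkLen {V : Type*} (A : V → V → Prop) (k : ℕ) (u v : V) : Prop :=
  ∃ f : Fin (k + 1) → V, IsWalk A k f ∧ f 0 = u ∧ f (Fin.last k) = v

def OnPath {V : Type*} (A : V → V → Prop) (k : ℕ) (s t a b : V) : Prop :=
  ∃ f : Fin (k + 1) → V, IsWalk A k f ∧ f 0 = s ∧ f (Fin.last k) = t ∧
    ∃ i : Fin k, f i.castSucc = a ∧ f i.succ = b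

section Walks
variable {V : Type*} {A : V → V → Prop}

lemma walkLen_zero_iff {u v : V} : WalkLen A 0 u v ↔ u = v :=
  ⟨fun ⟨_, _, h0, hl⟩ => h0.symm.trans hl, fun h => ⟨fun _ => u, fun i => i.elim0, rfl, h⟩⟩

lemma walkLen_succ_iff {n : ℕ} {u w : V} :
    WalkLen A (n + 1) u w ↔ ∃ v, WalkLen A n u v ∧ A v w := by
  constructor
  · rintro ⟨f, hf, h0, hl⟩
    refine ⟨f (Fin.last n).castSucc, ⟨Fin.init f, fun i => ?_, h0, rfl⟩, hl ▸ hf (Fin.last n)⟩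
    simpa [Fin.init] using hf i.castSucc
  · rintro ⟨v, ⟨f, hf, h0, hl⟩, hvw⟩
    refine ⟨Fin.snoc f w, fun i => ?_, by simpa using h0, by simp⟩
    cases i using Fin.lastCases with
    | last => simpa [hl] using hvw
    | cast i =>
      rw [Fin.succ_castSucc, Fin.snoc_castSucc, Fin.snoc_castSucc]
      exact hf i

lemma WalkLen.snoc {n : ℕ} {u v w : V} (h : WalkLen A n u v) (hvw : A v w) :
    WalkLen A (n + 1) u w :=
  walkLen_succ_iff.2 ⟨v, h, hvw⟩

lemma WalkLen.append {m n : ℕ} {a b c : V} (hab : WalkLen A m a b) (hbc : WalkLen A n b c) :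
    WalkLen A (m + n) a c := by
  induction n generalizing c with
  | zero => rwa [walkLen_zero_iff.1 hbc] at hab
  | succ n ih =>
    obtain ⟨v, hbv, hvc⟩ := walkLen_succ_iff.1 hbc
    exact (ih hbv).snoc hvc

variable {k : ℕ} {f : Fin (k + 1) → V}

lemma IsWalk.walkLen_prefix (hf : IsWalk A k f) (i : Fin (k + 1)) : WalkLen A i (f 0) (f i) := by
  induction i using Fin.induction with
  | zero => exact walkLen_zero_iff.2 rfl
  | succ i ih => exact ih.snoc (hf i)

lemma IsWalk.walkLen_suffix (hf : IsWalk A k f) (i : Fin (k + 1)) :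
    WalkLen A (k - i) (f i) (f (Fin.last k)) := by
  induction i using Fin.reverseInduction with
  | last => simpa using walkLen_zero_iff.2 rfl
  | cast i ih =>
    have hlen : k - i.castSucc = 0 + 1 + (k - i.succ) := by
      simp only [Fin.val_castSucc, Fin.val_succ]; omega
    rw [hlen]
    exact ((walkLen_zero_iff.2 rfl).snoc (hf i)).append ih

lemma IsWalk.apply_mem {S : Set V} (hS : ∀ u v, A u v → u ∈ S → v ∈ S) (hf : IsWalk A k f)
    (h0 : f 0 ∈ S) (i : Fin (k + 1)) : f i ∈ S := by
  induction i using Fin.induction with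
  | zero => exact h0
  | succ i ih => exact hS _ _ (hf i) ih

variable {s t a b : V}

lemma OnPath.walkLen (h : OnPath A k s t a b) : WalkLen A k s t :=
  let ⟨f, hf, h0, hl, _⟩ := h; ⟨f, hf, h0, hl⟩

lemma OnPath.arc (h : OnPath A k s t a b) : A a b := by
  obtain ⟨f, hf, -, -, i, rfl, rfl⟩ := h
  exact hf i

end Walks

-- `sInf ∅ = 0`: the value is junk for unreachable `v`, hence the reachability hypotheses below.
noncomputable def walkDist {V : Type*} (A : V → V → Prop) (s v : V) : ℕ :=
  sInf {j | WalkLen A j s v}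

section WalkDist
variable {V : Type*} {A : V → V → Prop} {k : ℕ} {s t u v a b : V}

lemma walkDist_le {j : ℕ} (h : WalkLen A j s v) : walkDist A s v ≤ j :=
  Nat.sInf_le h

lemma walkLen_walkDist (h : ∃ j, WalkLen A j s v) : WalkLen A (walkDist A s v) s v :=
  Nat.sInf_mem h

lemma walkDist_self : walkDist A s s = 0 :=
  Nat.le_zero.1 (walkDist_le (walkLen_zero_iff.2 rfl))

lemma walkDist_le_add_one (hu : ∃ j, WalkLen A j s u) (huv : A u v) :
    walkDist A s v ≤ walkDist A s u + 1 :=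
  walkDist_le ((walkLen_walkDist hu).snoc huv)

lemma walkDist_eq_of_shortest (hdist : ∀ j < k, ¬ WalkLen A j s t) {i j : ℕ}
    (hsv : WalkLen A i s v) (hvt : WalkLen A j v t) (hk : i + j = k) : walkDist A s v = i := by
  refine le_antisymm (walkDist_le hsv) (not_lt.1 fun hlt => ?_)
  exact hdist _ (by omega) ((walkLen_walkDist ⟨i, hsv⟩).append hvt)

lemma OnPath.walkDist_succ (hdist : ∀ j < k, ¬ WalkLen A j s t) (h : OnPath A k s t a b) :
    (∃ j, WalkLen A j s a) ∧ walkDist A s b = walkDist A s a + 1 := by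
  obtain ⟨f, hf, rfl, rfl, i, rfl, rfl⟩ := h
  have hdist_at : ∀ j, walkDist A (f 0) (f j) = j := fun j =>
    walkDist_eq_of_shortest hdist (hf.walkLen_prefix j) (hf.walkLen_suffix j) (by omega)
  refine ⟨⟨_, hf.walkLen_prefix _⟩, ?_⟩
  rw [hdist_at, hdist_at]
  simp

end WalkDist

lemma succ_eq_add_one_of_increments_le_one {k : ℕ} {f : Fin (k + 1) → ℕ}
    (hstep : ∀ i : Fin k, f i.succ ≤ f i.castSucc + 1) (htotal : f 0 + k ≤ f (Fin.last k))
    (i : Fin k) : f i.succ = f i.castSucc + 1 := by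
  have hup : ∀ j : Fin (k + 1), f j ≤ f 0 + j := by
    intro j
    induction j using Fin.induction with
    | zero => simp
    | succ j ih => have := hstep j; simp only [Fin.val_succ, Fin.val_castSucc] at *; omega
  have hdown : ∀ j : Fin (k + 1), f (Fin.last k) ≤ f j + (k - j) := by
    intro j
    induction j using Fin.reverseInduction with
    | last => simp
    | cast j ih => have := hstep j; simp only [Fin.val_succ, Fin.val_castSucc] at *; omega
  have := hup i.castSucc
  have := hdown i.succ
  have := hstep i
  simp only [Fin.val_succ, Fin.val_castSucc] at *
  omega

section Augment
variable {V : Type*} {A A' : V → V → Prop} {k : ℕ} {s t : V}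

theorem IsWalk.of_le_or_reverse_onPath (hdist : ∀ j < k, ¬ WalkLen A j s t)
    (hst : WalkLen A k s t) (hA' : ∀ u v, A' u v → A u v ∨ OnPath A k s t v u)
    {g : Fin (k + 1) → V} (hg : IsWalk A' k g) (h0 : g 0 = s) (hl : g (Fin.last k) = t) :
    IsWalk A k g := by
  have hreach_step : ∀ u v, A' u v → (∃ j, WalkLen A j s u) →
      (∃ j, WalkLen A j s v) ∧ walkDist A s v ≤ walkDist A s u + 1 := by
    intro u v huv hu
    rcases hA' u v huv with h | h
    · exact ⟨⟨_, (walkLen_walkDist hu).snoc h⟩, walkDist_le_add_one hu h⟩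
    · obtain ⟨hv, hvu⟩ := h.walkDist_succ hdist
      exact ⟨hv, by omega⟩
  have hreach : ∀ i, ∃ j, WalkLen A j s (g i) :=
    hg.apply_mem (S := {v | ∃ j, WalkLen A j s v}) (fun u v huv hu => (hreach_step u v huv hu).1)
      (h0 ▸ ⟨0, walkLen_zero_iff.2 rfl⟩)
  have htotal : walkDist A s (g 0) + k ≤ walkDist A s (g (Fin.last k)) := by
    rw [h0, hl, walkDist_self, walkDist_eq_of_shortest hdist hst (walkLen_zero_iff.2 rfl) rfl]
    simp
  intro i
  have hrise := succ_eq_add_one_of_increments_le_one (f := fun i => walkDist A s (g i))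
    (fun i => (hreach_step _ _ (hg i) (hreach _)).2) htotal i
  refine (hA' _ _ (hg i)).resolve_right fun hrev => ?_
  have := (hrev.walkDist_succ hdist).2
  omega

end Augment

lemma resCap_augment {N : ℕ} (ν x y : Fin N → Fin N → ℝ) (u v : Fin N) :
    resCap ν (fun u v => x u v + y u v - y v u) u v = resCap ν x u v - (y u v - y v u) := by
  unfold resCap
  rcases lt_trichotomy u v with h | rfl | h
  · simp only [if_pos h]; ring
  · simp
  · simp only [if_neg (not_lt.2 h.le), if_pos h]; ring

theorem shortest_path_arcs_strictly_decrease_general (N k : ℕ) (s t : Fin N)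
    (ν : Fin N → Fin N → ℝ)
    (x : Fin N → Fin N → ℝ)
    (hdist : ∀ j < k, ¬ WalkLen (fun u v => 0 < resCap ν x u v) j s t)
    (y : Fin N → Fin N → ℝ)
    (hycap : ∀ u v : Fin N, 0 ≤ y u v ∧ y u v ≤ resCap ν x u v)
    (hsupp : ∀ u v : Fin N, 0 < y u v →
      OnPath (fun a b => 0 < resCap ν x a b) k s t u v)
    (hsat : ∃ a b : Fin N, OnPath (fun u v => 0 < resCap ν x u v) k s t a b ∧
      y a b - y b a = resCap ν x a b) :
    let x' : Fin N → Fin N → ℝ := fun u v => x u v + y u v - y v u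
    let A' : Fin N → Fin N → Prop := fun u v => 0 < resCap ν x' u v
    {p : Fin N × Fin N | OnPath A' k s t p.1 p.2} ⊂
      {p : Fin N × Fin N | OnPath (fun u v => 0 < resCap ν x u v) k s t p.1 p.2} ∧
    Set.ncard {p : Fin N × Fin N | OnPath A' k s t p.1 p.2} <
      Set.ncard {p : Fin N × Fin N |
        OnPath (fun u v => 0 < resCap ν x u v) k s t p.1 p.2} := by
  intro x' A'
  obtain ⟨a, b, hab, hsat⟩ := hsat
  have hA' : ∀ u v, A' u v →
      0 < resCap ν x u v ∨ OnPath (fun u v => 0 < resCap ν x u v) k s t v u := by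
    intro u v huv
    refine (lt_or_ge 0 (resCap ν x u v)).imp id fun hle => hsupp v u ?_
    have : 0 < resCap ν x' u v := huv
    rw [resCap_augment] at this
    linarith [(hycap u v).1]
  have hsub : {p : Fin N × Fin N | OnPath A' k s t p.1 p.2} ⊆
      {p | OnPath (fun u v => 0 < resCap ν x u v) k s t p.1 p.2} :=
    fun _ ⟨g, hg, h0, hl, hp⟩ =>
      ⟨g, hg.of_le_or_reverse_onPath hdist hab.walkLen hA' h0 hl, h0, hl, hp⟩
  have hsaturated : (a, b) ∉ {p : Fin N × Fin N | OnPath A' k s t p.1 p.2} := fun h => by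
    have : 0 < resCap ν x' a b := h.arc
    rw [resCap_augment, hsat, sub_self] at this
    exact lt_irrefl 0 this
  have hss := (Set.ssubset_iff_of_subset hsub).2 ⟨(a, b), hab, hsaturated⟩
  exact ⟨hss, Set.ncard_lt_ncard hss (Set.toFinite _)⟩

/-- Strict decrease of the set `E*ₖ` of arcs on shortest (`length k`) `s`-`t`-paths:
if the residual distance from `s` to `t` is at least `k`, and the flow is augmented
along a flow `y` supported on `E*ₖ` that (net) saturates at least one arc of `E*ₖ`,
then the corresponding arc set `Ẽ*ₖ` of the new residual network is a strict subset
of `E*ₖ`; in particular its cardinality strictly decreases. -/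
theorem shortest_path_arcs_strictly_decrease (N k : ℕ) (s t : Fin N)
    (ν : Fin N → Fin N → ℝ) (hν : ∀ u v, 0 ≤ ν u v)
    (x : Fin N → Fin N → ℝ) (hx : IsFeasibleFlow s t ν x)
    (hdist : ∀ j < k, ¬ WalkLen (fun u v => 0 < resCap ν x u v) j s t)
    (y : Fin N → Fin N → ℝ)
    (hycap : ∀ u v : Fin N, 0 ≤ y u v ∧ y u v ≤ resCap ν x u v)
    (hycons : ∀ w : Fin N, w ≠ s → w ≠ t → ∑ u, y u w = ∑ v, y w v)
    (hsupp : ∀ u v : Fin N, 0 < y u v →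
      OnPath (fun a b => 0 < resCap ν x a b) k s t u v)
    (hsat : ∃ a b : Fin N, OnPath (fun u v => 0 < resCap ν x u v) k s t a b ∧
      y a b - y b a = resCap ν x a b)
    (hne : ∃ a b : Fin N, OnPath (fun u v => 0 < resCap ν x u v) k s t a b) :
    let x' : Fin N → Fin N → ℝ := fun u v => x u v + y u v - y v u
    let A' : Fin N → Fin N → Prop := fun u v => 0 < resCap ν x' u v
    {p : Fin N × Fin N | OnPath A' k s t p.1 p.2} ⊂
      {p : Fin N × Fin N | OnPath (fun u v => 0 < resCap ν x u v) k s t p.1 p.2} ∧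
    Set.ncard {p : Fin N × Fin N | OnPath A' k s t p.1 p.2} <
      Set.ncard {p : Fin N × Fin N |
        OnPath (fun u v => 0 < resCap ν x u v) k s t p.1 p.2} :=
  shortest_path_arcs_strictly_decrease_general N k s t ν x hdist y hycap hsupp hsat
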